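/- Let F, F₊, F₋ : {0,1}^n → ℝ satisfy F₋(x) ≤ F(x) ≤ F₊(x) for all x and E_U[F₊(U) − F₋(U)] ≤ δ. Then for any ε-biased distribution X on {0,1}^n, |E_X[F(X)] − E_U[F(U)]| ≤ δ + ε·max(L(F₊), L(F₋)), where L(G) = Σ_{s≠0} |Ĝ[s]|. -/

import Mathlib

/-!
Expanding in the characters, `E_μ[G] - E_U[G] = Σ_{s ≠ 0} Ĝ[s] E_μ[χ_s]`, so an `ε`-biased `μ`
fools every `G` up to `ε L(G)`. `F` itself may have large Fourier mass, but as `μ ≥ 0` the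
expectation `E_μ[F]` lies between `E_μ[F₋]` and `E_μ[F₊]`; these are within `ε L(F_±)` of
`E_U[F_±]`, which in turn are within `δ` of `E_U[F]`.
-/

open Finset

/-- The character `χ_s(x) = (-1)^(s·x)` on the Boolean cube. -/
def chi {ι : Type*} [Fintype ι] (s x : ι → Bool) : ℝ :=
  (-1 : ℝ) ^ (Finset.univ.filter fun i => s i && x i).card

/-- The Fourier coefficient `F̂[s] = E_{x∼U}[F(x) χ_s(x)]`. -/
noncomputable def fhat {ι : Type*} [Fintype ι] [DecidableEq ι]
    (F : (ι → Bool) → ℝ) (s : ι → Bool) : ℝ :=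
  (∑ x : ι → Bool, F x * chi s x) / 2 ^ Fintype.card ι

/-- Hamming weight of `s`. -/
def wt {ι : Type*} [Fintype ι] (s : ι → Bool) : ℕ :=
  (Finset.univ.filter fun i => s i).card

/-- Level-`k` Fourier mass `L^k(F) = Σ_{|s|=k} |F̂[s]|`. -/
noncomputable def levelMass {ι : Type*} [Fintype ι] [DecidableEq ι]
    (F : (ι → Bool) → ℝ) (k : ℕ) : ℝ :=
  ∑ s ∈ Finset.univ.filter (fun s : ι → Bool => wt s = k), |fhat F s|

/-- The `p`-damped Fourier mass `L_p(F) = Σ_{s≠0} p^{|s|} |F̂[s]|`. -/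
noncomputable def dampedMass {ι : Type*} [Fintype ι] [DecidableEq ι]
    (F : (ι → Bool) → ℝ) (p : ℝ) : ℝ :=
  ∑ s ∈ Finset.univ.filter (fun s : ι → Bool => s ≠ fun _ => false),
    p ^ wt s * |fhat F s|

section

variable {ι : Type*} [Fintype ι]

lemma chi_eq_prod (s x : ι → Bool) :
    chi s x = ∏ i, if s i && x i then (-1 : ℝ) else 1 := by
  classical
  rw [chi, prod_ite, prod_const, prod_const, one_pow, mul_one]

lemma chi_false_left (x : ι → Bool) : chi (fun _ => false) x = 1 := by
  simp [chi]

variable [DecidableEq ι]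

lemma sum_chi_mul_chi (x y : ι → Bool) :
    ∑ s, chi s x * chi s y = if x = y then (2 : ℝ) ^ Fintype.card ι else 0 := by
  have hcoord : ∀ i, ∑ b : Bool, (if b && x i then (-1 : ℝ) else 1) *
      (if b && y i then (-1 : ℝ) else 1) = if x i = y i then 2 else 0 := by
    intro i
    cases x i <;> cases y i <;> norm_num
  simp_rw [chi_eq_prod, ← prod_mul_distrib]
  rw [← Fintype.prod_sum (fun i b => (if b && x i then (-1 : ℝ) else 1) *
    (if b && y i then (-1 : ℝ) else 1))]
  simp_rw [hcoord, Fintype.prod_ite_zero, funext_iff, prod_const, card_univ]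

lemma sum_fhat_mul_chi (F : (ι → Bool) → ℝ) (x : ι → Bool) :
    ∑ s, fhat F s * chi s x = F x := by
  have hpow : (2 : ℝ) ^ Fintype.card ι ≠ 0 := by positivity
  calc ∑ s, fhat F s * chi s x
      = (∑ y, F y * ∑ s, chi s y * chi s x) / 2 ^ Fintype.card ι := by
        simp_rw [fhat, div_mul_eq_mul_div, ← sum_div, sum_mul, mul_sum, mul_assoc]
        rw [sum_comm]
    _ = F x := by
        simp_rw [sum_chi_mul_chi, mul_ite, mul_zero, sum_ite_eq', mem_univ, if_true]
        field_simp

lemma fhat_neg (F : (ι → Bool) → ℝ) (s : ι → Bool) :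
    fhat (fun x => -F x) s = -fhat F s := by
  simp only [fhat, neg_mul, sum_neg_distrib, neg_div]

lemma fhat_false_left (F : (ι → Bool) → ℝ) :
    fhat F (fun _ => false) = (∑ x, F x) / 2 ^ Fintype.card ι := by
  simp only [fhat, chi_false_left, mul_one]

noncomputable def fourierMass (F : (ι → Bool) → ℝ) : ℝ :=
  ∑ s ∈ univ.filter (fun s : ι → Bool => s ≠ fun _ => false), |fhat F s|

lemma fourierMass_neg (F : (ι → Bool) → ℝ) : fourierMass (fun x => -F x) = fourierMass F := by
  simp only [fourierMass, fhat_neg, abs_neg]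

variable {μ : (ι → Bool) → ℝ}

lemma sum_mul_sub_average_eq (hμ1 : ∑ x, μ x = 1) (F : (ι → Bool) → ℝ) :
    ∑ x, μ x * F x - (∑ x, F x) / 2 ^ Fintype.card ι =
      ∑ s ∈ univ.filter (fun s : ι → Bool => s ≠ fun _ => false),
        fhat F s * ∑ x, μ x * chi s x := by
  have hexpand : ∑ x, μ x * F x = ∑ s, fhat F s * ∑ x, μ x * chi s x := by
    simp_rw [mul_sum]
    rw [sum_comm]
    simp_rw [← sum_fhat_mul_chi F, mul_sum]
    exact sum_congr rfl fun _ _ => sum_congr rfl fun _ _ => by ring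
  rw [hexpand, ← sum_filter_add_sum_filter_not univ (fun s : ι → Bool => s ≠ fun _ => false),
    filter_not, add_sub_assoc, add_eq_left, sub_eq_zero]
  simp only [ne_eq, not_not, filter_eq', mem_univ, if_true, sum_singleton, chi_false_left,
    mul_one, hμ1, fhat_false_left]

lemma abs_sum_mul_sub_average_le {ε : ℝ} (hμ1 : ∑ x, μ x = 1)
    (hbias : ∀ s : ι → Bool, s ≠ (fun _ => false) → |∑ x, μ x * chi s x| ≤ ε)
    (F : (ι → Bool) → ℝ) :
    |∑ x, μ x * F x - (∑ x, F x) / 2 ^ Fintype.card ι| ≤ ε * fourierMass F := by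
  rw [sum_mul_sub_average_eq hμ1, fourierMass, mul_sum]
  refine (abs_sum_le_sum_abs _ _).trans (sum_le_sum fun s hs => ?_)
  rw [abs_mul, mul_comm ε]
  exact mul_le_mul_of_nonneg_left (hbias s (mem_filter.1 hs).2) (abs_nonneg _)

lemma sum_mul_sub_average_le_of_le {ε : ℝ} (hμ0 : ∀ x, 0 ≤ μ x) (hμ1 : ∑ x, μ x = 1)
    (hbias : ∀ s : ι → Bool, s ≠ (fun _ => false) → |∑ x, μ x * chi s x| ≤ ε)
    {F G : (ι → Bool) → ℝ} (hFG : ∀ x, F x ≤ G x) :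
    ∑ x, μ x * F x - (∑ x, F x) / 2 ^ Fintype.card ι ≤
      (∑ x, (G x - F x)) / 2 ^ Fintype.card ι + ε * fourierMass G := by
  have hweighted : ∑ x, μ x * F x ≤ ∑ x, μ x * G x :=
    sum_le_sum fun x _ => mul_le_mul_of_nonneg_left (hFG x) (hμ0 x)
  have hG := (le_abs_self _).trans (abs_sum_mul_sub_average_le hμ1 hbias G)
  rw [sum_sub_distrib, sub_div]
  linarith

end

/-- Sandwiching approximators plus an ε-biased distribution fool F. -/
theorem sandwich_fools {n : ℕ} (F Fp Fm : (Fin n → Bool) → ℝ) (δ ε : ℝ)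
    (hsand : ∀ x, Fm x ≤ F x ∧ F x ≤ Fp x)
    (hδ : (∑ x : Fin n → Bool, (Fp x - Fm x)) / 2 ^ n ≤ δ)
    (μ : (Fin n → Bool) → ℝ) (hμ0 : ∀ x, 0 ≤ μ x)
    (hμ1 : ∑ x : Fin n → Bool, μ x = 1)
    (hε : 0 ≤ ε)
    (hbias : ∀ s : Fin n → Bool, s ≠ (fun _ => false) →
      |∑ x : Fin n → Bool, μ x * chi s x| ≤ ε) :
    |(∑ x : Fin n → Bool, μ x * F x) - (∑ x : Fin n → Bool, F x) / 2 ^ n| ≤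
      δ + ε * max
        (∑ s ∈ Finset.univ.filter (fun s : Fin n → Bool => s ≠ fun _ => false), |fhat Fp s|)
        (∑ s ∈ Finset.univ.filter (fun s : Fin n → Bool => s ≠ fun _ => false), |fhat Fm s|) := by
  have hupper := sum_mul_sub_average_le_of_le hμ0 hμ1 hbias fun x => (hsand x).2
  have hlower := sum_mul_sub_average_le_of_le hμ0 hμ1 hbias (F := fun x => -F x)
    (G := fun x => -Fm x) fun x => neg_le_neg (hsand x).1
  simp only [Fintype.card_fin, mul_neg, sum_neg_distrib, neg_div, fourierMass_neg,
    neg_sub_neg] at hupper hlower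
  have hgap_upper : (∑ x, (Fp x - F x)) / 2 ^ n ≤ δ :=
    hδ.trans' (by gcongr with x; exact (hsand x).1)
  have hgap_lower : (∑ x, (F x - Fm x)) / 2 ^ n ≤ δ :=
    hδ.trans' (by gcongr with x; exact (hsand x).2)
  exact abs_sub_le_iff.2
    ⟨hupper.trans (add_le_add hgap_upper (mul_le_mul_of_nonneg_left (le_max_left _ _) hε)),
      hlower.trans (add_le_add hgap_lower (mul_le_mul_of_nonneg_left (le_max_right _ _) hε))⟩
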